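/- arXiv:1710.03083 — 5 statements merged into one kernel-verified Lean document; each statement's English description precedes it below -/
import Mathlib

section
/- Let e ≥ 1 and n ≥ 2 be integers, let X be a finite set, let 𝒮 be a family of nonempty subsets of X each of size at most n−1, and let H ⊆ X with |H| = e·(n−1)! be such that for every 1 ≤ s ≤ n−1 the function I ↦ #{S ∈ 𝒮 : I ⊆ S} is constant on the size-s subsets of H. Then #𝒮 ≡ #{S ∈ 𝒮 : S ∩ H = ∅} (mod e). -/
open Finset

lemma dvd_choose_factorial (e m s : ℕ) (hs1 : 1 ≤ s) (hsm : s ≤ m) :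
    e ∣ (e * Nat.factorial m).choose s := by
  rcases Nat.eq_zero_or_pos e with rfl | he
  · rw [Nat.zero_mul, Nat.choose_eq_zero_of_lt (by omega)]
  set N := e * Nat.factorial m with hN
  have hNpos : 1 ≤ N := Nat.one_le_iff_ne_zero.mpr (by positivity)
  have key : N * Nat.choose (N - 1) (s - 1) = Nat.choose N s * s := by
    have := Nat.add_one_mul_choose_eq (N - 1) (s - 1)
    simpa [Nat.succ_eq_add_one, Nat.sub_add_cancel hNpos, Nat.sub_add_cancel hs1] using this
  have hes : e * s ∣ Nat.choose N s * s := by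
    refine dvd_trans ?_ (key ▸ Dvd.dvd.mul_right (mul_dvd_mul_left e (Nat.dvd_factorial hs1 hsm)) _)
    exact dvd_refl _
  exact (Nat.mul_dvd_mul_iff_right hs1).mp hes

/-- Key counting step: if `𝒮` is a family of nonempty subsets of `X` of size at
most `n - 1`, and `H ⊆ X` has cardinality `e·(n-1)!` and is such that for every
`1 ≤ s ≤ n - 1` the map `I ↦ #{S ∈ 𝒮 : I ⊆ S}` is constant on the size-`s`
subsets of `H`, then `#𝒮 ≡ #{S ∈ 𝒮 : S ∩ H = ∅} (mod e)`. -/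
theorem card_modEq_card_disjoint {α : Type*} [DecidableEq α]
    (e n : ℕ) (he : 1 ≤ e) (hn : 2 ≤ n)
    (X : Finset α) (𝒮 : Finset (Finset α))
    (h𝒮 : ∀ S ∈ 𝒮, S ⊆ X ∧ S.Nonempty ∧ S.card ≤ n - 1)
    (H : Finset α) (hH : H ⊆ X) (hHcard : H.card = e * Nat.factorial (n - 1))
    (hconst : ∀ s : ℕ, 1 ≤ s → s ≤ n - 1 →
      ∀ I J : Finset α, I ⊆ H → J ⊆ H → I.card = s → J.card = s →
        (𝒮.filter fun S => I ⊆ S).card = (𝒮.filter fun S => J ⊆ S).card) :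
    𝒮.card ≡ (𝒮.filter fun S => S ∩ H = ∅).card [MOD e] := by
  classical
  set m := n - 1 with hm
  have hm1 : 1 ≤ m := by omega
  set c : Finset α → ℕ := fun I => (𝒮.filter fun S => I ⊆ S).card with hc
  -- Step A: e divides the sum of counts over subsets of H of any fixed size s ≥ 1
  have hA : ∀ s : ℕ, 1 ≤ s → e ∣ ∑ I ∈ powersetCard s H, c I := by
    intro s hs1
    by_cases hsm : s ≤ m
    · have hsH : s ≤ H.card := by
        rw [hHcard]
        calc s ≤ m := hsm
          _ ≤ m.factorial := Nat.self_le_factorial m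
          _ ≤ e * m.factorial := Nat.le_mul_of_pos_left _ he
      obtain ⟨I₀, hI₀H, hI₀card⟩ := exists_subset_card_eq hsH
      have heq : ∑ I ∈ powersetCard s H, c I = (powersetCard s H).card * c I₀ := by
        rw [← smul_eq_mul, ← sum_const]
        refine sum_congr rfl fun I hI => ?_
        obtain ⟨hIH, hIcard⟩ := mem_powersetCard.mp hI
        exact hconst s hs1 hsm I I₀ hIH hI₀H hIcard hI₀card
      rw [heq, card_powersetCard, hHcard]
      exact Dvd.dvd.mul_right (dvd_choose_factorial e m s hs1 hsm) _
    · have heq : ∑ I ∈ powersetCard s H, c I = 0 := by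
        refine sum_eq_zero fun I hI => ?_
        obtain ⟨hIH, hIcard⟩ := mem_powersetCard.mp hI
        rw [hc, card_eq_zero, filter_eq_empty_iff]
        intro S hS hIS
        have h1 := (h𝒮 S hS).2.2
        have h2 := card_le_card hIS
        omega
      simp [heq]
  -- work in ZMod e
  rw [← ZMod.natCast_eq_natCast_iff]
  set F : Finset α → ZMod e := fun I => if I = ∅ then 0 else (-1) ^ (I.card + 1) with hF
  have hpow : ∀ T : Finset α, (∑ I ∈ T.powerset, ((-1 : ZMod e) ^ I.card))
      = if T = ∅ then 1 else 0 := by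
    intro T
    have h := Finset.sum_powerset_neg_one_pow_card (x := T)
    calc (∑ I ∈ T.powerset, ((-1 : ZMod e) ^ I.card))
        = (((∑ I ∈ T.powerset, ((-1 : ℤ) ^ I.card)) : ℤ) : ZMod e) := by push_cast; ring_nf
      _ = _ := by rw [h]; split <;> simp
  have hS1 : ∀ T : Finset α, (∑ I ∈ T.powerset, F I)
      = 1 - (if T = ∅ then 1 else 0 : ZMod e) := by
    intro T
    have hptw : ∀ I : Finset α, F I = (if I = ∅ then (1 : ZMod e) else 0) - (-1) ^ I.card := by
      intro I
      by_cases hI : I = ∅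
      · simp [hF, hI]
      · simp only [hF, if_neg hI]
        rw [pow_succ]; ring
    rw [sum_congr rfl fun I _ => hptw I, sum_sub_distrib, hpow,
      Finset.sum_ite_eq' T.powerset (∅ : Finset α) (fun _ => (1 : ZMod e)),
      if_pos (mem_powerset.mpr (empty_subset T))]
  have key : (𝒮.card : ZMod e) - ((𝒮.filter fun S => S ∩ H = ∅).card : ZMod e)
      = ∑ I ∈ H.powerset, F I * c I := by
    have lhs : (𝒮.card : ZMod e) - ((𝒮.filter fun S => S ∩ H = ∅).card : ZMod e)
        = ∑ S ∈ 𝒮, (1 - (if S ∩ H = ∅ then 1 else 0 : ZMod e)) := by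
      rw [sum_sub_distrib, sum_const, card_filter]
      push_cast
      simp [sum_boole]
    rw [lhs]
    calc ∑ S ∈ 𝒮, (1 - (if S ∩ H = ∅ then 1 else 0 : ZMod e))
        = ∑ S ∈ 𝒮, ∑ I ∈ (S ∩ H).powerset, F I := by
          exact sum_congr rfl fun S _ => (hS1 (S ∩ H)).symm
      _ = ∑ S ∈ 𝒮, ∑ I ∈ H.powerset, (if I ⊆ S then F I else 0) := by
          refine sum_congr rfl fun S _ => ?_
          rw [← sum_filter]
          refine sum_congr ?_ (fun _ _ => rfl)
          ext I
          simp only [mem_powerset, mem_filter, subset_inter_iff]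
          tauto
      _ = ∑ I ∈ H.powerset, ∑ S ∈ 𝒮, (if I ⊆ S then F I else 0) := sum_comm
      _ = ∑ I ∈ H.powerset, F I * c I := by
          refine sum_congr rfl fun I _ => ?_
          rw [← sum_filter, sum_const, hc]
          simp only [smul_eq_mul]
          ring
  have hzero : ∑ I ∈ H.powerset, F I * c I = 0 := by
    rw [Finset.sum_powerset]
    refine sum_eq_zero fun j hj => ?_
    rcases Nat.eq_zero_or_pos j with rfl | hj1
    · simp [powersetCard_zero, hF]
    · have : ∀ I ∈ powersetCard j H, F I * c I = (-1) ^ (j + 1) * (c I : ZMod e) := by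
        intro I hI
        obtain ⟨hIH, hIcard⟩ := mem_powersetCard.mp hI
        have hIne : I ≠ ∅ := by
          intro h; rw [h, card_empty] at hIcard; omega
        rw [hF]; simp [hIne, hIcard]
      rw [sum_congr rfl this, ← mul_sum, ← Nat.cast_sum]
      rw [(ZMod.natCast_eq_zero_iff _ _).mpr (hA j hj1), mul_zero]
  rw [hzero] at key
  exact sub_eq_zero.mp key
end

section
/- (One-step combinatorial interpolation.) For all positive integers e, n, N there exists a positive integer d with the following property: for every finite set X with |X| ≥ d and every coloring t of the nonempty subsets of X of size at most n−1 by N colors, there exists a subset H ⊆ X with |H| = e·(n−1)! (in particular H is nonempty) such that for every color a and every 1 ≤ s ≤ n−1: #{S ⊆ X : |S| = s and t(S) = a} ≡ #{S ⊆ X \ H : |S| = s and t(S) = a} (mod e). -/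
/-!
Colour each set `J` by the residues mod `e` of the numbers `N_{a,s}(J)` of `s`-subsets of `X` of
colour `a` containing `J`. By the hypergraph Ramsey theorem, applied once for each size `j < n`, a
large `X` contains a set `H` of size `e·(n-1)!` on which this colour depends only on `|J|`.
Inclusion–exclusion writes the number of `s`-subsets of colour `a` avoiding `H` as
`∑_{J ⊆ H} (-1)^|J| N_{a,s}(J)`. The terms with `|J| > s` vanish, and for `1 ≤ j ≤ s` the
`j`-subsets of `H` contribute `choose |H| j` times a common value, which is `0` mod `e` because
`j ∣ (n-1)!`. Only the term `J = ∅`, the count in all of `X`, survives.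

Ramsey's theorem is proved in the usual way: from Ramsey for `r`-sets one builds an end-homogeneous
sequence, in which the colour of an `(r+1)`-set depends only on its first term, and pigeonholing
these colours gives Ramsey for `(r+1)`-sets.
-/

open Finset

universe u

section Ramsey

variable {α κ : Type*}

def IsMonochromaticOn (c : Finset α → κ) (r : ℕ) (Y : Finset α) : Prop :=
  ∃ γ, ∀ S ⊆ Y, #S = r → c S = γ

theorem IsMonochromaticOn.mono {c : Finset α → κ} {r : ℕ} {Y Z : Finset α}
    (h : IsMonochromaticOn c r Y) (hZY : Z ⊆ Y) : IsMonochromaticOn c r Z :=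
  let ⟨γ, hγ⟩ := h
  ⟨γ, fun S hS => hγ S (hS.trans hZY)⟩

theorem IsMonochromaticOn.comp {κ' : Type*} {c : Finset α → κ} {r : ℕ} {Y : Finset α}
    (h : IsMonochromaticOn c r Y) (f : κ → κ') : IsMonochromaticOn (f ∘ c) r Y :=
  let ⟨γ, hγ⟩ := h
  ⟨f γ, fun S hS hSr => congrArg f (hγ S hS hSr)⟩

variable (κ) in
def IsRamseyBound (r m d : ℕ) : Prop :=
  ∀ (α : Type u) (X : Finset α) (c : Finset α → κ), d ≤ #X →
    ∃ Y ⊆ X, m ≤ #Y ∧ IsMonochromaticOn c r Y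

theorem Fin.image_cons_Ioi_succ [DecidableEq α] {M : ℕ} (x₀ : α) (x : Fin M → α) (i : Fin M) :
    (Ioi i.succ).image (Fin.cons x₀ x : Fin (M + 1) → α) = (Ioi i).image x := by
  rw [← Fin.map_succEmb_Ioi, map_eq_image, image_image]
  rfl

theorem Fin.image_cons_Ioi_zero [DecidableEq α] {M : ℕ} (x₀ : α) (x : Fin M → α) :
    (Ioi 0).image (Fin.cons x₀ x : Fin (M + 1) → α) = univ.image x := by
  rw [Fin.Ioi_zero_eq_map, map_eq_image, image_image]
  rfl

theorem exists_endHomogeneous_seq {r : ℕ} (hR : ∀ m, ∃ d, IsRamseyBound.{u} κ r m d) (M : ℕ) :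
    ∃ d, ∀ (α : Type u) [DecidableEq α] (X : Finset α) (c : Finset α → κ), d ≤ #X →
      ∃ (x : Fin M → α) (γ : Fin M → κ), (∀ i, x i ∈ X) ∧ Function.Injective x ∧
        ∀ i, ∀ T ⊆ (Ioi i).image x, #T = r → c (insert (x i) T) = γ i := by
  induction M with
  | zero => exact ⟨0, fun _ _ _ _ _ => ⟨finZeroElim, finZeroElim, finZeroElim, fun i => i.elim0,
      finZeroElim⟩⟩
  | succ M ih =>
    obtain ⟨dM, hdM⟩ := ih
    obtain ⟨d, hd⟩ := hR dM
    refine ⟨d + 1, fun α _ X c hX => ?_⟩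
    obtain ⟨x₀, hx₀⟩ : X.Nonempty := card_pos.mp (by omega)
    obtain ⟨Y, hYX, hY, γ₀, hγ₀⟩ := hd α (X.erase x₀) (fun T => c (insert x₀ T))
      (by rw [card_erase_of_mem hx₀]; omega)
    obtain ⟨x, γ, hxY, hx, hγ⟩ := hdM α Y c hY
    refine ⟨Fin.cons x₀ x, Fin.cons γ₀ γ, Fin.cases hx₀ fun j => mem_of_mem_erase (hYX (hxY j)),
      Fin.cons_injective_iff.2 ⟨fun ⟨j, hj⟩ => ne_of_mem_erase (hYX (hxY j)) hj, hx⟩, ?_⟩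
    refine Fin.cases (fun T hT => hγ₀ T (hT.trans ?_)) fun i => ?_
    · rw [Fin.image_cons_Ioi_zero]
      exact image_subset_iff.2 fun j _ => hxY j
    · rw [Fin.image_cons_Ioi_succ]
      exact hγ i

theorem exists_mem_erase_subset_image_Ioi {ι : Type*} [LinearOrder ι] [LocallyFiniteOrderTop ι]
    [DecidableEq α] {x : ι → α} {I : Finset ι} {S : Finset α} (hSI : S ⊆ I.image x)
    (hS : S.Nonempty) : ∃ i ∈ I, x i ∈ S ∧ S.erase (x i) ⊆ (Ioi i).image x := by
  set J := I.filter (x · ∈ S)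
  have hJ : J.Nonempty := by
    obtain ⟨a, ha⟩ := hS
    obtain ⟨i, hi, rfl⟩ := mem_image.1 (hSI ha)
    exact ⟨i, mem_filter.2 ⟨hi, ha⟩⟩
  obtain ⟨hiI, hiS⟩ := mem_filter.1 (J.min'_mem hJ)
  refine ⟨J.min' hJ, hiI, hiS, fun a ha => ?_⟩
  obtain ⟨hne, haS⟩ := mem_erase.1 ha
  obtain ⟨k, hk, rfl⟩ := mem_image.1 (hSI haS)
  have hkJ : k ∈ J := mem_filter.2 ⟨hk, haS⟩
  exact mem_image_of_mem x (mem_Ioi.2 ((J.min'_le k hkJ).lt_of_ne fun h => hne (h ▸ rfl)))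

variable (κ) [Finite κ]

theorem exists_isRamseyBound (r m : ℕ) : ∃ d, IsRamseyBound.{u} κ r m d := by
  classical
  induction r generalizing m with
  | zero =>
    refine ⟨m, fun α X c hX => ⟨X, subset_rfl, hX, c ∅, fun S _ hS => ?_⟩⟩
    rw [card_eq_zero.1 hS]
  | succ r ih =>
    have := Fintype.ofFinite κ
    obtain ⟨d, hd⟩ := exists_endHomogeneous_seq ih (Fintype.card κ * (m - 1) + 1)
    refine ⟨d, fun α X c hX => ?_⟩
    obtain ⟨x, γ, hxX, hx, hγ⟩ := hd α X c hX
    obtain ⟨γ₀, hγ₀⟩ := Fintype.exists_lt_card_fiber_of_mul_lt_card (f := γ) (n := m - 1)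
      (by simp)
    set I := univ.filter (γ · = γ₀)
    refine ⟨I.image x, image_subset_iff.2 fun i _ => hxX i, ?_, γ₀, fun S hSI hS => ?_⟩
    · rw [card_image_of_injective _ hx]
      omega
    obtain ⟨i, hiI, hiS, hSi⟩ := exists_mem_erase_subset_image_Ioi hSI (card_pos.1 (by omega))
    rw [← insert_erase hiS, hγ i _ hSi (by rw [card_erase_of_mem hiS, hS]; rfl)]
    exact (mem_filter.1 hiI).2

theorem exists_isMonochromaticOn_forall_lt (r m : ℕ) :
    ∃ d, ∀ (α : Type u) (X : Finset α) (c : Finset α → κ), d ≤ #X →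
      ∃ Y ⊆ X, m ≤ #Y ∧ ∀ j < r, IsMonochromaticOn c j Y := by
  induction r with
  | zero => exact ⟨m, fun α X c hX => ⟨X, subset_rfl, hX, fun j hj => absurd hj j.not_lt_zero⟩⟩
  | succ r ih =>
    obtain ⟨dr, hdr⟩ := ih
    obtain ⟨d, hd⟩ := exists_isRamseyBound κ r dr
    refine ⟨d, fun α X c hX => ?_⟩
    obtain ⟨Y₁, hY₁X, hY₁, hmono⟩ := hd α X c hX
    obtain ⟨Y, hYY₁, hY, hYmono⟩ := hdr α Y₁ c hY₁
    refine ⟨Y, hYY₁.trans hY₁X, hY, fun j hj => ?_⟩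
    obtain hj | rfl := Nat.lt_succ_iff_lt_or_eq.1 hj
    · exact hYmono j hj
    · exact hmono.mono hYY₁

end Ramsey

theorem Nat.dvd_choose_mul_of_dvd {e k j : ℕ} (hj : 0 < j) (hjk : j ∣ k) :
    e ∣ (e * k).choose j := by
  obtain ⟨q, rfl⟩ := hjk
  obtain ⟨i, rfl⟩ := Nat.exists_eq_add_one.2 hj
  cases hm : e * ((i + 1) * q) with
  | zero => simp
  | succ m =>
    refine ⟨q * m.choose i, Nat.eq_of_mul_eq_mul_right hj ?_⟩
    rw [← Nat.add_one_mul_choose_eq, ← hm]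
    ring

section InclusionExclusion

variable {α : Type*} [DecidableEq α]

theorem card_filter_disjoint_eq_sum_powerset (A : Finset (Finset α)) (H : Finset α) :
    (#{S ∈ A | Disjoint S H} : ℤ) = ∑ J ∈ H.powerset, (-1 : ℤ) ^ #J * #{S ∈ A | J ⊆ S} := by
  simp_rw [natCast_card_filter, mul_sum, mul_ite, mul_one, mul_zero]
  rw [sum_comm]
  refine sum_congr rfl fun S _ => ?_
  have hS : {J ∈ H.powerset | J ⊆ S} = (S ∩ H).powerset := by
    ext J
    simp only [mem_filter, mem_powerset, subset_inter_iff, and_comm]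
  rw [← sum_filter, hS, sum_powerset_neg_one_pow_card]
  exact if_congr disjoint_iff_inter_eq_empty rfl rfl

theorem card_modEq_card_filter_disjoint {e s : ℕ} {A : Finset (Finset α)} {H : Finset α}
    (hA : ∀ S ∈ A, #S = s) (hH : ∀ j, 1 ≤ j → j ≤ s → e ∣ (#H).choose j)
    (hmono : ∀ j, 1 ≤ j → j ≤ s → IsMonochromaticOn (fun J => (#{S ∈ A | J ⊆ S} : ZMod e)) j H) :
    #A ≡ #{S ∈ A | Disjoint S H} [MOD e] := by
  rw [← ZMod.natCast_eq_natCast_iff]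
  have hincl := congrArg (Int.cast : ℤ → ZMod e) (card_filter_disjoint_eq_sum_powerset A H)
  push_cast at hincl
  rw [hincl, sum_powerset, sum_eq_single_of_mem 0 (by simp)]
  · simp
  intro j _ hj
  obtain hjs | hsj := le_or_gt j s
  · obtain ⟨γ, hγ⟩ := hmono j (by omega) hjs
    have hconst : ∀ J ∈ powersetCard j H,
        (-1) ^ #J * (#{S ∈ A | J ⊆ S} : ZMod e) = (-1) ^ j * γ := fun J hJ => by
      rw [mem_powersetCard] at hJ
      rw [hJ.2, ← hγ J hJ.1 hJ.2]
    rw [sum_congr rfl hconst, sum_const, card_powersetCard, nsmul_eq_mul,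
      (ZMod.natCast_eq_zero_iff _ _).2 (hH j (by omega) hjs), zero_mul]
  · refine sum_eq_zero fun J hJ => ?_
    rw [filter_false_of_mem fun S hS hJS => ?_, card_empty, Nat.cast_zero, mul_zero]
    have := card_le_card hJS
    rw [(mem_powersetCard.1 hJ).2, hA S hS] at this
    omega

end InclusionExclusion

theorem one_step_interpolation_general (e n N : ℕ) (he : 0 < e) :
    ∃ d : ℕ, 0 < d ∧
      ∀ (α : Type) [DecidableEq α] (X : Finset α), d ≤ X.card →
        ∀ t : Finset α → Fin N,
          ∃ H : Finset α, H ⊆ X ∧ H.card = e * Nat.factorial (n - 1) ∧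
            ∀ (a : Fin N) (s : ℕ), 1 ≤ s → s ≤ n - 1 →
              (X.powerset.filter fun S => S.card = s ∧ t S = a).card ≡
                ((X \ H).powerset.filter fun S => S.card = s ∧ t S = a).card [MOD e] := by
  have : NeZero e := ⟨he.ne'⟩
  obtain ⟨d, hd⟩ :=
    exists_isMonochromaticOn_forall_lt (Fin N → Fin n → ZMod e) n (e * Nat.factorial (n - 1))
  refine ⟨d + 1, d.succ_pos, fun α _ X hX t => ?_⟩
  let colorClass (a : Fin N) (s : ℕ) : Finset (Finset α) :=
    X.powerset.filter fun S => S.card = s ∧ t S = a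
  obtain ⟨Y, hYX, hY, hmono⟩ :=
    hd α X (fun J a s => (#{S ∈ colorClass a s | J ⊆ S} : ZMod e)) (by omega)
  obtain ⟨H, hHY, hH⟩ := exists_subset_card_eq hY
  refine ⟨H, hHY.trans hYX, hH, fun a s hs₁ hs₂ => ?_⟩
  have hdisj : ((X \ H).powerset.filter fun S => S.card = s ∧ t S = a) =
      {S ∈ colorClass a s | Disjoint S H} := by
    ext S
    simp only [colorClass, mem_filter, mem_powerset, subset_sdiff]
    tauto
  rw [hdisj]
  exact card_modEq_card_filter_disjoint (fun S hS => (mem_filter.1 hS).2.1)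
    (fun j hj hjs => hH ▸ Nat.dvd_choose_mul_of_dvd hj (Nat.dvd_factorial hj (by omega)))
    fun j _ hjs => ((hmono j (by omega)).mono hHY).comp fun γ => γ a ⟨s, by omega⟩

/-- One-step combinatorial interpolation: for all positive `e`, `n`, `N` there
is a positive `d` such that for every finite set `X` with `|X| ≥ d` and every
coloring `t` of the (nonempty, of size `≤ n-1`) subsets of `X` by `N` colors,
there is `H ⊆ X` with `|H| = e·(n-1)!` such that for every color `a` and every
`1 ≤ s ≤ n-1` the number of size-`s` subsets of `X` with color `a` is congruent
mod `e` to the number of size-`s` subsets of `X \ H` with color `a`. -/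
theorem one_step_interpolation (e n N : ℕ) (he : 0 < e) (hn : 0 < n) (hN : 0 < N) :
    ∃ d : ℕ, 0 < d ∧
      ∀ (α : Type) [DecidableEq α] (X : Finset α), d ≤ X.card →
        ∀ t : Finset α → Fin N,
          ∃ H : Finset α, H ⊆ X ∧ H.card = e * Nat.factorial (n - 1) ∧
            ∀ (a : Fin N) (s : ℕ), 1 ≤ s → s ≤ n - 1 →
              (X.powerset.filter fun S => S.card = s ∧ t S = a).card ≡
                ((X \ H).powerset.filter fun S => S.card = s ∧ t S = a).card [MOD e] :=
  one_step_interpolation_general e n N he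
end

section
/- Let p be a prime, V a finite set, and E a finite set of pairs in V × V. Then there exists a coloring c : V → Fin p with c(u) ≠ c(v) for all (u,v) ∈ E if and only if there exists r : V → ℤ/p²ℤ with p·∏_{(u,v) ∈ E}(r(u) − r(v))^{p−1} = p in ℤ/p²ℤ. -/
lemma pmul_eq_zero (p : ℕ) (hp : p.Prime) (z : ZMod (p^2))
    (h : (ZMod.castHom (dvd_pow_self p two_ne_zero) (ZMod p)) z = 0) :
    (p : ZMod (p^2)) * z = 0 := by
  haveI : NeZero (p^2) := ⟨pow_ne_zero 2 hp.ne_zero⟩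
  have hz : ((z.val : ℕ) : ZMod (p^2)) = z := ZMod.natCast_zmod_val z
  have h2 : ((z.val : ℕ) : ZMod p) = 0 := by
    rw [← map_natCast (ZMod.castHom (dvd_pow_self p two_ne_zero) (ZMod p)), hz, h]
  obtain ⟨m, hm⟩ := (ZMod.natCast_eq_zero_iff _ _).mp h2
  rw [← hz, hm]
  push_cast
  ring_nf
  rw [show ((p:ZMod (p^2))^2) = ((p^2 : ℕ) : ZMod (p^2)) by push_cast; ring,
    ZMod.natCast_self, zero_mul]

lemma pmul_eq_p (p : ℕ) (hp : p.Prime) (z : ZMod (p^2))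
    (h : (ZMod.castHom (dvd_pow_self p two_ne_zero) (ZMod p)) z = 1) :
    (p : ZMod (p^2)) * z = p := by
  have := pmul_eq_zero p hp (z - 1) (by rw [map_sub, h, map_one, sub_self])
  rw [mul_sub, mul_one, sub_eq_zero] at this
  exact this

/-- Reduction of graph `p`-colorability to equation solvability over the
nilpotent algebra `A_p`: there is a proper `p`-coloring of the (directed) edge
set `E` if and only if the equation `p·∏_{(u,v) ∈ E}(r(u) − r(v))^(p-1) = p`
has a solution in `ℤ/p²ℤ`. -/
theorem colorable_iff_eq_solvable (p : ℕ) (hp : p.Prime)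
    (V : Type) [Fintype V] (E : Finset (V × V)) :
    (∃ c : V → Fin p, ∀ e ∈ E, c e.1 ≠ c e.2) ↔
      (∃ r : V → ZMod (p ^ 2),
        (p : ZMod (p ^ 2)) * ∏ e ∈ E, (r e.1 - r e.2) ^ (p - 1) =
          (p : ZMod (p ^ 2))) := by
  haveI : Fact p.Prime := ⟨hp⟩
  haveI : NeZero (p^2) := ⟨pow_ne_zero 2 hp.ne_zero⟩
  set φ := ZMod.castHom (dvd_pow_self p two_ne_zero) (ZMod p) with hφ
  constructor
  · rintro ⟨c, hc⟩
    refine ⟨fun v => ((c v : ℕ) : ZMod (p^2)), ?_⟩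
    apply pmul_eq_p p hp
    rw [map_prod]
    apply Finset.prod_eq_one
    intro e he
    rw [map_pow, map_sub, map_natCast, map_natCast]
    apply ZMod.pow_card_sub_one_eq_one
    rw [sub_ne_zero]
    intro hcontra
    apply hc e he
    have : ((c e.1 : ℕ) : ZMod p).val = ((c e.2 : ℕ) : ZMod p).val := by rw [hcontra]
    rw [ZMod.val_cast_of_lt (c e.1).isLt, ZMod.val_cast_of_lt (c e.2).isLt] at this
    exact Fin.ext this
  · rintro ⟨r, hr⟩
    refine ⟨fun v => ⟨(φ (r v)).val, ZMod.val_lt _⟩, ?_⟩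
    intro e he hcontra
    have hval : φ (r e.1) = φ (r e.2) := by
      have := congrArg Fin.val hcontra
      simpa using ZMod.val_injective p this
    have h0 : φ ((r e.1 - r e.2) ^ (p - 1)) = 0 := by
      rw [map_pow, map_sub, hval, sub_self, zero_pow (Nat.sub_ne_zero_of_lt hp.one_lt)]
    have : (p : ZMod (p^2)) * ∏ e ∈ E, (r e.1 - r e.2) ^ (p - 1) = 0 :=
      pmul_eq_zero p hp _ (by rw [map_prod]; exact Finset.prod_eq_zero he h0)
    rw [this] at hr
    have : ¬ ((p:ℕ) ^ 2 ∣ p) := by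
      intro hd
      have := Nat.le_of_dvd hp.pos hd
      nlinarith [hp.two_le]
    exact this ((ZMod.natCast_eq_zero_iff p (p^2)).mp hr.symm)
end

section
/- Let p be a prime, V a finite set, and E a finite set of pairs in V × V. Then there is no coloring c : V → Fin p with c(u) ≠ c(v) for all (u,v) ∈ E if and only if p·∏_{(u,v) ∈ E}(r(u) − r(v))^{p−1} = 0 in ℤ/p²ℤ for every function r : V → ℤ/p²ℤ. -/
section Aux

variable (p : ℕ)

lemma aux_p_mul_eq_zero (hp : p.Prime) (z : ZMod (p ^ 2))
    (h : ZMod.castHom (dvd_pow_self p two_ne_zero) (ZMod p) z = 0) :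
    (p : ZMod (p ^ 2)) * z = 0 := by
  haveI : NeZero (p ^ 2) := ⟨pow_ne_zero 2 hp.ne_zero⟩
  haveI : NeZero p := ⟨hp.ne_zero⟩
  have hv : ((z.val : ZMod p)) = 0 := by
    rwa [ZMod.castHom_apply, ← ZMod.natCast_val] at h
  rw [ZMod.natCast_eq_zero_iff] at hv
  obtain ⟨m, hm⟩ := hv
  have hz : z = ((p * m : ℕ) : ZMod (p ^ 2)) := by
    rw [← hm, ZMod.natCast_val, ZMod.cast_id]
  rw [hz, ← Nat.cast_mul, ZMod.natCast_eq_zero_iff]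
  ring_nf
  exact ⟨m, by ring⟩

lemma aux_p_mul_eq_p (hp : p.Prime) (z : ZMod (p ^ 2))
    (h : ZMod.castHom (dvd_pow_self p two_ne_zero) (ZMod p) z = 1) :
    (p : ZMod (p ^ 2)) * z = p := by
  have := aux_p_mul_eq_zero p hp (z - 1) (by rw [map_sub, h, map_one, sub_self])
  rw [mul_sub, mul_one, sub_eq_zero] at this
  exact this

lemma aux_p_mul_pow_eq_zero (hp : p.Prime) (x : ZMod (p ^ 2))
    (h : ZMod.castHom (dvd_pow_self p two_ne_zero) (ZMod p) x = 0) :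
    (p : ZMod (p ^ 2)) * x ^ (p - 1) = 0 := by
  haveI : NeZero (p ^ 2) := ⟨pow_ne_zero 2 hp.ne_zero⟩
  haveI : NeZero p := ⟨hp.ne_zero⟩
  have hv : ((x.val : ZMod p)) = 0 := by
    rwa [ZMod.castHom_apply, ← ZMod.natCast_val] at h
  rw [ZMod.natCast_eq_zero_iff] at hv
  obtain ⟨m, hm⟩ := hv
  have hx : x = ((p * m : ℕ) : ZMod (p ^ 2)) := by
    rw [← hm, ZMod.natCast_val, ZMod.cast_id]
  rw [hx, ← Nat.cast_pow, ← Nat.cast_mul, ZMod.natCast_eq_zero_iff]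
  have h1 : p ∣ (p * m) ^ (p - 1) :=
    dvd_pow (dvd_mul_right p m) (Nat.sub_ne_zero_of_lt hp.one_lt)
  calc p ^ 2 = p * p := sq p
  _ ∣ p * (p * m) ^ (p - 1) := mul_dvd_mul_left p h1

end Aux

/-- Reduction of graph non-`p`-colorability to identity checking over the
nilpotent algebra `A_p`: there is no proper `p`-coloring of the (directed)
edge set `E` if and only if `p·∏_{(u,v) ∈ E}(r(u) − r(v))^(p-1) = 0` in
`ℤ/p²ℤ` for every `r`. -/
theorem not_colorable_iff_identity (p : ℕ) (hp : p.Prime)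
    (V : Type) [Fintype V] (E : Finset (V × V)) :
    (¬ ∃ c : V → Fin p, ∀ e ∈ E, c e.1 ≠ c e.2) ↔
      (∀ r : V → ZMod (p ^ 2),
        (p : ZMod (p ^ 2)) * ∏ e ∈ E, (r e.1 - r e.2) ^ (p - 1) = 0) := by
  haveI : NeZero (p ^ 2) := ⟨pow_ne_zero 2 hp.ne_zero⟩
  haveI : NeZero p := ⟨hp.ne_zero⟩
  haveI : Fact p.Prime := ⟨hp⟩
  classical
  set φ := ZMod.castHom (dvd_pow_self p two_ne_zero) (ZMod p) with hφ
  constructor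
  · intro h r
    by_contra hne
    apply h
    refine ⟨fun v => ⟨(φ (r v)).val, ZMod.val_lt _⟩, ?_⟩
    intro e he hc
    apply hne
    have h0 : φ (r e.1 - r e.2) = 0 := by
      rw [map_sub, sub_eq_zero]
      have := congrArg Fin.val hc
      simp only at this
      exact ZMod.val_injective p this
    rw [← Finset.mul_prod_erase E _ he, ← mul_assoc,
      aux_p_mul_pow_eq_zero p hp _ h0, zero_mul]
  · rintro h ⟨c, hc⟩
    have hr := h (fun v => ((c v : ℕ) : ZMod (p ^ 2)))
    have hone : φ (∏ e ∈ E, ((((c e.1 : ℕ) : ZMod (p ^ 2))) - ((c e.2 : ℕ) : ZMod (p ^ 2))) ^ (p - 1)) = 1 := by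
      rw [map_prod]
      apply Finset.prod_eq_one
      intro e he
      rw [map_pow, map_sub]
      apply ZMod.pow_card_sub_one_eq_one
      rw [map_natCast, map_natCast, sub_ne_zero]
      intro heq
      apply hc e he
      have h1 : ((c e.1 : ℕ) : ZMod p).val = ((c e.2 : ℕ) : ZMod p).val := by rw [heq]
      rw [ZMod.val_cast_of_lt (c e.1).isLt, ZMod.val_cast_of_lt (c e.2).isLt,
        ] at h1
      exact Fin.val_injective h1
    have := aux_p_mul_eq_p p hp _ hone
    rw [hr] at this
    have : ((p : ℕ) : ZMod (p ^ 2)) = 0 := this.symm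
    rw [ZMod.natCast_eq_zero_iff] at this
    exact absurd (Nat.le_of_dvd hp.pos this) (not_le.mpr (by nlinarith [hp.two_le]))
end

section
/- Let p be an odd prime and let G be a simple graph on a finite vertex set V. Then G is p-colorable if and only if there exists r : V → ℤ/p²ℤ such that p times the product, over all edges {u,v} of G, of (r(u) − r(v))^{p−1} equals p in ℤ/p²ℤ. (The factor (r(u) − r(v))^{p−1} is independent of the order of u and v since p−1 is even, so the product over unordered edges is well-defined, e.g., via Sym2.lift over G.edgeFinset.) -/
lemma mul_p_eq_zero_iff (p : ℕ) (hp : p.Prime) (a : ZMod (p ^ 2)) :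
    (p : ZMod (p ^ 2)) * a = 0 ↔
      ZMod.castHom (dvd_pow_self p two_ne_zero) (ZMod p) a = 0 := by
  haveI : NeZero (p ^ 2) := ⟨pow_ne_zero 2 hp.ne_zero⟩
  haveI : NeZero p := ⟨hp.ne_zero⟩
  rw [ZMod.castHom_apply, ZMod.cast_eq_val, ZMod.natCast_eq_zero_iff]
  constructor
  · intro h
    have h2 : ((p * a.val : ℕ) : ZMod (p ^ 2)) = 0 := by
      rw [Nat.cast_mul, ZMod.natCast_val, ZMod.cast_id]; exact h
    rw [ZMod.natCast_eq_zero_iff] at h2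
    rcases h2 with ⟨k, hk⟩
    refine ⟨k, Nat.eq_of_mul_eq_mul_left hp.pos ?_⟩
    rw [hk, pow_two, mul_assoc]
  · rintro ⟨k, hk⟩
    have ha : a = ((p * k : ℕ) : ZMod (p ^ 2)) := by
      rw [← hk, ZMod.natCast_val, ZMod.cast_id]
    rw [ha, Nat.cast_mul, ← mul_assoc]
    have hz : (p : ZMod (p ^ 2)) * (p : ZMod (p ^ 2)) = 0 := by
      rw [← Nat.cast_mul, ← pow_two, ZMod.natCast_self]
    rw [hz, zero_mul]

lemma mul_p_eq_p_iff (p : ℕ) (hp : p.Prime) (x : ZMod (p ^ 2)) :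
    (p : ZMod (p ^ 2)) * x = (p : ZMod (p ^ 2)) ↔
      ZMod.castHom (dvd_pow_self p two_ne_zero) (ZMod p) x = 1 := by
  have h := mul_p_eq_zero_iff p hp (x - 1)
  rw [mul_sub, mul_one, sub_eq_zero, map_sub, map_one, sub_eq_zero] at h
  exact h

/-- Let `p` be an odd prime and `G` a simple graph on a finite vertex set `V`.
Then `G` is `p`-colorable iff there is `r : V → ℤ/p²ℤ` such that `p` times the
product over all (unordered) edges `{u,v}` of `G` of `(r(u) − r(v))^(p-1)`
equals `p` in `ℤ/p²ℤ`. Since `p - 1` is even, the factor is independent of the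
order of `u` and `v`, so the product over unordered edges is well-defined. -/
theorem colorable_iff_eq_solvable_simpleGraph (p : ℕ) (hp : p.Prime) (hodd : Odd p)
    (V : Type) [Fintype V] (G : SimpleGraph V) [DecidableRel G.Adj] :
    G.Colorable p ↔
      ∃ r : V → ZMod (p ^ 2),
        (p : ZMod (p ^ 2)) * ∏ e ∈ G.edgeFinset,
          Sym2.lift ⟨fun u v => (r u - r v) ^ (p - 1),
            fun u v => by
              simp only []; rw [← neg_sub (r v) (r u), Even.neg_pow (Nat.Odd.sub_odd hodd odd_one)]⟩ e =
          (p : ZMod (p ^ 2)) := by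
  haveI : Fact p.Prime := ⟨hp⟩
  haveI : NeZero p := ⟨hp.ne_zero⟩
  set φ := ZMod.castHom (dvd_pow_self p two_ne_zero) (ZMod p) with hφ
  have hp1 : p - 1 ≠ 0 := by
    have := hp.two_le; omega
  -- key reformulation
  have key : ∀ r : V → ZMod (p ^ 2),
      ((p : ZMod (p ^ 2)) * ∏ e ∈ G.edgeFinset,
          Sym2.lift ⟨fun u v => (r u - r v) ^ (p - 1),
            fun u v => by
              simp only []; rw [← neg_sub (r v) (r u), Even.neg_pow (Nat.Odd.sub_odd hodd odd_one)]⟩ e =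
          (p : ZMod (p ^ 2))) ↔
        ∀ u v, G.Adj u v → φ (r u) ≠ φ (r v) := by
    intro r
    rw [mul_p_eq_p_iff p hp, map_prod]
    have hfac : ∀ e ∈ G.edgeFinset,
        φ (Sym2.lift ⟨fun u v => (r u - r v) ^ (p - 1),
            fun u v => by
              simp only []; rw [← neg_sub (r v) (r u), Even.neg_pow (Nat.Odd.sub_odd hodd odd_one)]⟩ e)
          = Sym2.lift ⟨fun u v => (φ (r u) - φ (r v)) ^ (p - 1),
            fun u v => by
              simp only []; rw [← neg_sub (φ (r v)) (φ (r u)), Even.neg_pow (Nat.Odd.sub_odd hodd odd_one)]⟩ e := by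
      intro e _
      induction e using Sym2.inductionOn with
      | hf u v => simp [map_pow, map_sub]
    rw [Finset.prod_congr rfl hfac]
    constructor
    · intro h u v huv
      have hmem : s(u, v) ∈ G.edgeFinset := by
        rw [SimpleGraph.mem_edgeFinset, SimpleGraph.mem_edgeSet]; exact huv
      intro heq
      have hz : Sym2.lift ⟨fun u v => (φ (r u) - φ (r v)) ^ (p - 1),
            fun u v => by
              simp only []; rw [← neg_sub (φ (r v)) (φ (r u)), Even.neg_pow (Nat.Odd.sub_odd hodd odd_one)]⟩ s(u, v) = 0 := by
        simp [heq, sub_self, zero_pow hp1]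
      have := Finset.prod_eq_zero hmem hz
      rw [this] at h
      exact one_ne_zero h.symm
    · intro h
      apply Finset.prod_eq_one
      intro e he
      induction e using Sym2.inductionOn with
      | hf u v =>
        have huv : G.Adj u v := by
          rwa [SimpleGraph.mem_edgeFinset, SimpleGraph.mem_edgeSet] at he
        have hne : φ (r u) - φ (r v) ≠ 0 := sub_ne_zero.mpr (h u v huv)
        simpa using ZMod.pow_card_sub_one_eq_one hne
  constructor
  · rintro ⟨C⟩
    refine ⟨fun v => ((C v : Fin p) : ℕ), ?_⟩
    rw [key]
    intro u v huv heq
    have : (((C u : Fin p) : ℕ) : ZMod p) = (((C v : Fin p) : ℕ) : ZMod p) := by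
      simpa [map_natCast] using heq
    have hval : ((C u : Fin p) : ℕ) = ((C v : Fin p) : ℕ) := by
      have h1 := ZMod.val_cast_of_lt (a := ((C u : Fin p) : ℕ)) (Fin.is_lt _)
      have h2 := ZMod.val_cast_of_lt (a := ((C v : Fin p) : ℕ)) (Fin.is_lt _)
      rw [← h1, ← h2, this]
    exact C.valid huv (Fin.val_injective hval)
  · rintro ⟨r, hr⟩
    rw [key] at hr
    have C : G.Coloring (ZMod p) := SimpleGraph.Coloring.mk (fun v => φ (r v))
      (fun {u v} huv => hr u v huv)
    have := C.colorable
    rwa [ZMod.card] at this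
end
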